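/- Let G be a 2-edge-connected, non-regular finite graph (multiple edges allowed, no loops), let F be a weak 2-factor of G, let w ∈ V(G) and λ ∈ {0,1}. Let T be a good weakly even (w,λ)-tree in G of maximum order, with (w,λ)-bipartition (X₀,Y₀), and suppose V(T) ≠ V(G). Then no edge of G joins a vertex of X₀ to a vertex outside V(T), and some edge of G joins a vertex of Y₀ to a vertex outside V(T). -/

import Mathlib

/-- A multigraph on vertex type `V` with edge type `E`: each edge is assigned an
unordered pair of distinct endpoints (multiple edges allowed, no loops). -/
structure Multigraph (V : Type) (E : Type) where
  inc : E → Sym2 V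
  loopless : ∀ e : E, ¬ (inc e).IsDiag

namespace Multigraph

variable {V E : Type}

/-- `u` and `v` are joined by an edge belonging to the edge set `S`. -/
def AdjOn (G : Multigraph V E) (S : Set E) (u v : V) : Prop :=
  ∃ e ∈ S, G.inc e = s(u, v)

/-- `v` is reachable from `u` using edges in `S`. -/
def ReachOn (G : Multigraph V E) (S : Set E) (u v : V) : Prop :=
  Relation.ReflTransGen (G.AdjOn S) u v

/-- `G` is connected. -/
def Connected (G : Multigraph V E) : Prop :=
  Nonempty V ∧ ∀ u v : V, G.ReachOn Set.univ u v

/-- The degree of `v` in the spanning subgraph with edge set `S`. -/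
noncomputable def degOn (G : Multigraph V E) (S : Set E) (v : V) : ℕ :=
  {e ∈ S | v ∈ G.inc e}.ncard

/-- The degree of `v` in `G`. -/
noncomputable def degree (G : Multigraph V E) (v : V) : ℕ :=
  G.degOn Set.univ v

/-- The maximum degree `Δ(G)`. -/
noncomputable def maxDegree (G : Multigraph V E) [Fintype V] : ℕ :=
  Finset.univ.sup G.degree

/-- `G` is regular. -/
def IsRegular (G : Multigraph V E) : Prop :=
  ∃ r : ℕ, ∀ v : V, G.degree v = r

/-- The 2-colouring `c` is proper on the edge set `S`: the two endpoints of any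
edge of `S` receive different colours. -/
def ProperOn (G : Multigraph V E) (S : Set E) (c : V → Bool) : Prop :=
  ∀ e ∈ S, ∀ u v : V, G.inc e = s(u, v) → c u ≠ c v

/-- `G` is bipartite. -/
def IsBipartite (G : Multigraph V E) : Prop :=
  ∃ c : V → Bool, G.ProperOn Set.univ c

/-- The sub-multigraph of `G` with vertex set `U` and edge set `S` is a tree:
`U` is nonempty, every edge of `S` joins vertices of `U`, any two vertices of `U`
are joined by a walk using edges of `S`, and there are exactly `|U| - 1` edges
(which forces acyclicity, and in particular forbids parallel edges in `S`). -/
structure IsTree (G : Multigraph V E) (U : Set V) (S : Set E) : Prop where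
  nonempty : U.Nonempty
  edges_in : ∀ e ∈ S, ∀ v : V, v ∈ G.inc e → v ∈ U
  conn : ∀ u ∈ U, ∀ v ∈ U, G.ReachOn S u v
  card_eq : S.ncard + 1 = U.ncard

/-- `v` is a leaf of the subgraph with edge set `S`. -/
def IsLeaf (G : Multigraph V E) (S : Set E) (v : V) : Prop :=
  G.degOn S v = 1

/-- `e` is a cutedge: after removing `e`, some pair of vertices is separated. -/
def IsCutedge (G : Multigraph V E) (e : E) : Prop :=
  ∃ u v : V, ¬ G.ReachOn {e}ᶜ u v

/-- `G` is 2-edge-connected: connected and without cutedges. -/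
def TwoEdgeConnected (G : Multigraph V E) : Prop :=
  G.Connected ∧ ∀ e : E, ¬ G.IsCutedge e

/-- The edge set `S` is a weak 2-factor of `G`: every vertex has degree at most
2 in `S` (equivalently, every component of the spanning subgraph is a path —
possibly a single vertex — or a cycle), and every vertex of degree less than 2
in `S` (i.e. every endvertex of a path component) has degree less than `Δ(G)`
in `G`. -/
def IsWeakTwoFactor (G : Multigraph V E) [Fintype V] (S : Set E) : Prop :=
  ∀ v : V, G.degOn S v ≤ 2 ∧ (G.degOn S v < 2 → G.degree v < G.maxDegree)

end Multigraph

/-!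
Suppose an edge joins a type-0 vertex `u` of `T` to a vertex `v` outside `T`. The component `C`
of `F` containing `v` is disjoint from `T` (as `T` is good), and it is a path or a cycle since
`F` has maximum degree 2. Span `C` by a path: all of `C` if `C` is a path; if `C` is a cycle,
open it so that `v` is an end (even cycle) or next to an end (odd cycle). Colour this path so
that `v` has type 1. Then `T + uv + path` is a good weakly even `(w, λ)`-tree: each of its new
leaves is either an end of a path of `F`, hence of degree less than `Δ(G)`, or of type 0. This
contradicts the maximality of `T`. Finally, as `G` is connected, some edge leaves `V(T)`, and
its end in `V(T)` can only be of type 1.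
-/
namespace Multigraph

variable {V E : Type} {G : Multigraph V E} {S F : Set E} {U W : Set V} {u v x y : V}

lemma adjOn_comm : G.AdjOn S u v ↔ G.AdjOn S v u := by
  simp only [AdjOn, Sym2.eq_swap]

lemma ReachOn.symm (h : G.ReachOn S u v) : G.ReachOn S v u := by
  induction h with
  | refl => exact Relation.ReflTransGen.refl
  | tail _ hxy ih => exact Relation.ReflTransGen.head (adjOn_comm.1 hxy) ih

lemma ReachOn.trans (h : G.ReachOn S u v) (h' : G.ReachOn S v x) : G.ReachOn S u x :=
  Relation.ReflTransGen.trans h h'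

lemma ReachOn.mono {T : Set E} (hST : S ⊆ T) (h : G.ReachOn S u v) : G.ReachOn T u v :=
  Relation.ReflTransGen.mono (fun _ _ ⟨e, he, hinc⟩ => ⟨e, hST he, hinc⟩) u v h

lemma ReachOn.exists_adjOn_of_mem_of_notMem (h : G.ReachOn S u v) (hu : u ∈ W) (hv : v ∉ W) :
    ∃ x y, G.AdjOn S x y ∧ x ∈ W ∧ y ∉ W := by
  induction h with
  | refl => exact absurd hu hv
  | @tail x y _ hxy ih =>
    by_cases hx : x ∈ W
    · exact ⟨x, y, hxy, hx, hv⟩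
    · exact ih hx

lemma degOn_union [Finite E] {A B : Set E} (h : Disjoint A B) (x : V) :
    G.degOn (A ∪ B) x = G.degOn A x + G.degOn B x := by
  rw [degOn, show {e ∈ A ∪ B | x ∈ G.inc e} = {e ∈ A | x ∈ G.inc e} ∪ {e ∈ B | x ∈ G.inc e} by
    ext; simp [or_and_right]]
  exact Set.ncard_union_eq (h.mono (Set.sep_subset _ _) (Set.sep_subset _ _))

open Classical in
lemma degOn_singleton (e : E) (x : V) : G.degOn {e} x = if x ∈ G.inc e then 1 else 0 := by
  split_ifs with hx
  · rw [degOn, show {f ∈ ({e} : Set E) | x ∈ G.inc f} = {e} by ext; simp +contextual [hx]]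
    exact Set.ncard_singleton e
  · rw [degOn, show {f ∈ ({e} : Set E) | x ∈ G.inc f} = ∅ by ext; simp +contextual [hx]]
    exact Set.ncard_empty E

lemma degOn_eq_zero (hS : ∀ e ∈ S, ∀ y ∈ G.inc e, y ∈ W) (hx : x ∉ W) : G.degOn S x = 0 := by
  rw [degOn, (Set.eq_empty_iff_forall_notMem (s := {e ∈ S | x ∈ G.inc e})).2
    fun e he => hx (hS e he.1 x he.2), Set.ncard_empty]

lemma one_le_degOn [Finite E] {e : E} (he : e ∈ S) (hx : x ∈ G.inc e) : 1 ≤ G.degOn S x :=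
  (Set.ncard_pos).2 ⟨e, he, hx⟩

lemma two_le_degOn [Finite E] {a b : E} (ha : a ∈ S) (hb : b ∈ S) (hxa : x ∈ G.inc a)
    (hxb : x ∈ G.inc b) (hab : a ≠ b) : 2 ≤ G.degOn S x := by
  rw [← Set.ncard_pair hab]
  exact Set.ncard_le_ncard (Set.pair_subset ⟨ha, hxa⟩ ⟨hb, hxb⟩)

lemma eq_or_eq_of_degOn_le_two [Finite E] {a b f : E} (hdeg : G.degOn S x ≤ 2)
    (ha : a ∈ S) (hb : b ∈ S) (hf : f ∈ S) (hxa : x ∈ G.inc a) (hxb : x ∈ G.inc b)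
    (hxf : x ∈ G.inc f) (hab : a ≠ b) : f = a ∨ f = b := by
  by_contra! hne
  have : 2 < G.degOn S x :=
    (Set.two_lt_ncard).2 ⟨a, ⟨ha, hxa⟩, b, ⟨hb, hxb⟩, f, ⟨hf, hxf⟩, hab, hne.1.symm, hne.2.symm⟩
  omega

lemma exists_inc_eq_of_one_le_degOn (h : 1 ≤ G.degOn S x) :
    ∃ f ∈ S, ∃ y, G.inc f = s(x, y) := by
  obtain ⟨f, hf, hxf⟩ := Set.nonempty_of_ncard_ne_zero (s := {f ∈ S | x ∈ G.inc f})
    (Nat.one_le_iff_ne_zero.1 h)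
  exact ⟨f, hf, Sym2.mem_iff_exists.1 hxf⟩

lemma exists_edge_ne_of_two_le_degOn [Finite E] {e : E} (h : 2 ≤ G.degOn S x) :
    ∃ f ∈ S, f ≠ e ∧ ∃ y, G.inc f = s(x, y) := by
  obtain ⟨f, ⟨hf, hxf⟩, hfe⟩ := Set.exists_ne_of_one_lt_ncard (s := {f ∈ S | x ∈ G.inc f}) h e
  exact ⟨f, hf, hfe, Sym2.mem_iff_exists.1 hxf⟩

lemma ne_of_inc_eq {e : E} (he : G.inc e = s(x, y)) : x ≠ y := fun hxy =>
  G.loopless e (by rw [he, hxy]; exact Sym2.mk_isDiag_iff.2 rfl)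

namespace IsTree

lemma degOn_eq_zero (ht : G.IsTree U S) (hx : x ∉ U) : G.degOn S x = 0 :=
  Multigraph.degOn_eq_zero ht.edges_in hx

lemma one_le_degOn [Finite E] (ht : G.IsTree U S) (hv : v ∈ U) (hu : u ∈ U) (huv : u ≠ v) :
    1 ≤ G.degOn S v := by
  rcases (ht.conn v hv u hu).cases_head with rfl | ⟨y, ⟨e, he, hinc⟩, -⟩
  · exact absurd rfl huv
  · exact Multigraph.one_le_degOn he (hinc ▸ Sym2.mem_mk_left v y)

variable {U₂ : Set V} {S₂ : Set E} {e : E}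

lemma disjoint_insert (h₁ : G.IsTree U S) (h₂ : G.IsTree U₂ S₂) (hU : Disjoint U U₂)
    (he : G.inc e = s(u, v)) (hu : u ∈ U) (hv : v ∈ U₂) :
    Disjoint S (insert e S₂) ∧ e ∉ S₂ := by
  have hvU : v ∉ U := Set.disjoint_right.1 hU hv
  have huU₂ : u ∉ U₂ := Set.disjoint_left.1 hU hu
  refine ⟨Set.disjoint_left.2 fun f hf hf₂ => ?_,
    fun h => huU₂ (h₂.edges_in e h u (he ▸ Sym2.mem_mk_left u v))⟩
  rcases hf₂ with rfl | hf₂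
  · exact hvU (h₁.edges_in f hf v (he ▸ Sym2.mem_mk_right u v))
  · exact Set.disjoint_left.1 hU (h₁.edges_in f hf _ (Sym2.out_fst_mem _))
      (h₂.edges_in f hf₂ _ (Sym2.out_fst_mem _))

lemma union_insert [Finite V] [Finite E] (h₁ : G.IsTree U S) (h₂ : G.IsTree U₂ S₂)
    (hU : Disjoint U U₂) (he : G.inc e = s(u, v)) (hu : u ∈ U) (hv : v ∈ U₂) :
    G.IsTree (U ∪ U₂) (S ∪ insert e S₂) where
  nonempty := h₁.nonempty.mono Set.subset_union_left
  edges_in := by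
    rintro f (hf | rfl | hf) y hy
    · exact Or.inl (h₁.edges_in f hf y hy)
    · rw [he, Sym2.mem_iff] at hy
      rcases hy with rfl | rfl
      exacts [Or.inl hu, Or.inr hv]
    · exact Or.inr (h₂.edges_in f hf y hy)
  conn := by
    have hto : ∀ a ∈ U ∪ U₂, G.ReachOn (S ∪ insert e S₂) a u := by
      rintro a (ha | ha)
      · exact (h₁.conn a ha u hu).mono Set.subset_union_left
      · exact ((h₂.conn a ha v hv).mono fun f hf => Or.inr (Or.inr hf)).tail
          ⟨e, Or.inr (Or.inl rfl), he.trans Sym2.eq_swap⟩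
    exact fun a ha b hb => (hto a ha).trans (hto b hb).symm
  card_eq := by
    obtain ⟨hS, he₂⟩ := h₁.disjoint_insert h₂ hU he hu hv
    rw [Set.ncard_union_eq hS, Set.ncard_insert_of_notMem he₂, Set.ncard_union_eq hU,
      ← h₁.card_eq, ← h₂.card_eq]
    omega

end IsTree

lemma ProperOn.union_insert [DecidablePred (· ∈ U)] {U₂ : Set V} {S₂ : Set E} {e : E}
    {c c₂ : V → Bool} (hc : G.ProperOn S c) (hc₂ : G.ProperOn S₂ c₂)
    (hS : ∀ f ∈ S, ∀ y ∈ G.inc f, y ∈ U) (hS₂ : ∀ f ∈ S₂, ∀ y ∈ G.inc f, y ∈ U₂)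
    (hU : Disjoint U U₂) (he : G.inc e = s(u, v)) (hu : u ∈ U) (hv : v ∉ U)
    (huv : c u ≠ c₂ v) : G.ProperOn (S ∪ insert e S₂) (U.piecewise c c₂) := by
  rintro f (hf | rfl | hf) a b hab
  · rw [Set.piecewise_eq_of_mem _ _ _ (hS f hf a (hab ▸ Sym2.mem_mk_left a b)),
      Set.piecewise_eq_of_mem _ _ _ (hS f hf b (hab ▸ Sym2.mem_mk_right a b))]
    exact hc f hf a b hab
  · rcases Sym2.eq_iff.1 (hab.symm.trans he) with ⟨rfl, rfl⟩ | ⟨rfl, rfl⟩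
    · simpa [Set.piecewise_eq_of_mem _ _ _ hu, Set.piecewise_eq_of_notMem _ _ _ hv] using huv
    · simpa [Set.piecewise_eq_of_mem _ _ _ hu, Set.piecewise_eq_of_notMem _ _ _ hv]
        using huv.symm
  · have hnot : ∀ y ∈ G.inc f, y ∉ U := fun y hy => Set.disjoint_right.1 hU (hS₂ f hf y hy)
    rw [Set.piecewise_eq_of_notMem _ _ _ (hnot a (hab ▸ Sym2.mem_mk_left a b)),
      Set.piecewise_eq_of_notMem _ _ _ (hnot b (hab ▸ Sym2.mem_mk_right a b))]
    exact hc₂ f hf a b hab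

/-- The path `z 0 — z 1 — ⋯ — z n` of `F`, with `e i` joining `z i` and `z (i + 1)`; the values
of `z` and `e` beyond the path are irrelevant. -/
structure IsChain (G : Multigraph V E) (F : Set E) (n : ℕ) (z : ℕ → V) (e : ℕ → E) : Prop where
  injOn : Set.InjOn z (Set.Iic n)
  mem : ∀ i < n, e i ∈ F
  inc_eq : ∀ i < n, G.inc (e i) = s(z i, z (i + 1))

namespace IsChain

variable {n p i j : ℕ} {z : ℕ → V} {e : ℕ → E}

lemma mem_inc_left (h : G.IsChain F n z e) (hi : i < n) : z i ∈ G.inc (e i) :=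
  h.inc_eq i hi ▸ Sym2.mem_mk_left _ _

lemma mem_inc_right (h : G.IsChain F n z e) (hi : i < n) : z (i + 1) ∈ G.inc (e i) :=
  h.inc_eq i hi ▸ Sym2.mem_mk_right _ _

lemma eq_of_mem_inc (h : G.IsChain F n z e) (hi : i ≤ n) (hj : j < n)
    (hz : z i ∈ G.inc (e j)) : i = j ∨ i = j + 1 := by
  rw [h.inc_eq j hj, Sym2.mem_iff] at hz
  exact hz.imp (h.injOn hi (Set.mem_Iic.2 (by omega))) (h.injOn hi (Set.mem_Iic.2 (by omega)))

lemma injOn_edge (h : G.IsChain F n z e) : Set.InjOn e (Set.Iio n) := by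
  intro i hi j hj hij
  simp only [Set.mem_Iio] at hi hj
  have h₁ := h.eq_of_mem_inc hi.le hj (hij ▸ h.mem_inc_left hi)
  have h₂ := h.eq_of_mem_inc hi hj (hij ▸ h.mem_inc_right hi)
  omega

lemma mem_image_of_mem_inc (h : G.IsChain F n z e) (hj : j < n) (hy : y ∈ G.inc (e j)) :
    y ∈ z '' Set.Iic n := by
  rw [h.inc_eq j hj, Sym2.mem_iff] at hy
  rcases hy with rfl | rfl
  exacts [⟨j, Set.mem_Iic.2 (by omega), rfl⟩, ⟨j + 1, Set.mem_Iic.2 (by omega), rfl⟩]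

lemma reachOn {S : Set E} (h : G.IsChain F n z e) (hS : ∀ i < n, e i ∈ S) (hi : i ≤ n)
    (hj : j ≤ n) : G.ReachOn S (z i) (z j) := by
  have from_zero : ∀ j ≤ n, G.ReachOn S (z 0) (z j) := by
    intro j hj
    induction j with
    | zero => exact Relation.ReflTransGen.refl
    | succ k ih => exact (ih (by omega)).tail ⟨e k, hS k (by omega), h.inc_eq k (by omega)⟩
  exact (from_zero i hi).symm.trans (from_zero j hj)

lemma two_le_degOn [Finite E] {S : Set E} (h : G.IsChain F n z e) (hS : ∀ i < n, e i ∈ S)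
    (hi : i + 1 < n) : 2 ≤ G.degOn S (z (i + 1)) :=
  Multigraph.two_le_degOn (hS i (by omega)) (hS (i + 1) hi) (h.mem_inc_right (by omega))
    (h.mem_inc_left hi)
    (h.injOn_edge.ne (Set.mem_Iio.2 (by omega)) (Set.mem_Iio.2 (by omega)) (by omega))

lemma eq_or_eq_of_mem_inc [Finite E] {f : E} (h : G.IsChain F n z e)
    (hdeg : ∀ x, G.degOn F x ≤ 2) (hi : i + 1 < n) (hf : f ∈ F)
    (hzf : z (i + 1) ∈ G.inc f) : f = e i ∨ f = e (i + 1) :=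
  eq_or_eq_of_degOn_le_two (hdeg _) (h.mem i (by omega)) (h.mem (i + 1) hi) hf
    (h.mem_inc_right (by omega)) (h.mem_inc_left hi) hzf
    (h.injOn_edge.ne (Set.mem_Iio.2 (by omega)) (Set.mem_Iio.2 (by omega)) (by omega))

lemma component_eq [Finite E] (h : G.IsChain F n z e) (hdeg : ∀ x, G.degOn F x ≤ 2)
    (hp : p ≤ n) (h₀ : ∀ y, G.AdjOn F (z 0) y → y ∈ z '' Set.Iic n)
    (hₙ : ∀ y, G.AdjOn F (z n) y → y ∈ z '' Set.Iic n) :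
    {x | G.ReachOn F (z p) x} = z '' Set.Iic n := by
  refine Set.Subset.antisymm (fun x hx => ?_) fun _ ⟨i, hi, hx⟩ => hx ▸ h.reachOn h.mem hp hi
  induction hx with
  | refl => exact ⟨p, hp, rfl⟩
  | tail _ hxy ih =>
    obtain ⟨i, hi, rfl⟩ := ih
    simp only [Set.mem_Iic] at hi
    rcases Nat.eq_zero_or_pos i with rfl | hi₀
    · exact h₀ _ hxy
    rcases hi.eq_or_lt with rfl | hin
    · exact hₙ _ hxy
    obtain ⟨k, rfl⟩ : ∃ k, i = k + 1 := ⟨i - 1, by omega⟩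
    obtain ⟨f, hf, hfz⟩ := hxy
    rcases h.eq_or_eq_of_mem_inc hdeg hin hf (hfz ▸ Sym2.mem_mk_left _ _) with rfl | rfl
    · exact h.mem_image_of_mem_inc (by omega) (hfz ▸ Sym2.mem_mk_right _ _)
    · exact h.mem_image_of_mem_inc hin (hfz ▸ Sym2.mem_mk_right _ _)

lemma snoc {f : E} (h : G.IsChain F n z e) (hf : f ∈ F) (hfz : G.inc f = s(z n, x))
    (hx : x ∉ z '' Set.Iic n) :
    G.IsChain F (n + 1) (Function.update z (n + 1) x) (Function.update e n f) where
  injOn i hi j hj hij := by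
    simp only [Set.mem_Iic, Function.update_apply] at hi hj hij
    split_ifs at hij with h₁ h₂ h₂
    · omega
    · exact absurd ⟨j, Set.mem_Iic.2 (by omega), hij.symm⟩ hx
    · exact absurd ⟨i, Set.mem_Iic.2 (by omega), hij⟩ hx
    · exact h.injOn (Set.mem_Iic.2 (by omega)) (Set.mem_Iic.2 (by omega)) hij
  mem i hi := by
    rcases (Nat.lt_succ_iff.1 hi).lt_or_eq with hi | rfl
    · rw [Function.update_of_ne hi.ne]; exact h.mem i hi
    · rw [Function.update_self]; exact hf
  inc_eq i hi := by
    rcases (Nat.lt_succ_iff.1 hi).lt_or_eq with hi | rfl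
    · rw [Function.update_of_ne hi.ne, Function.update_of_ne (by omega),
        Function.update_of_ne (by omega)]
      exact h.inc_eq i hi
    · rw [Function.update_self, Function.update_self, Function.update_of_ne (by omega)]
      exact hfz

lemma reverse (h : G.IsChain F n z e) :
    G.IsChain F n (fun i => z (n - i)) (fun i => e (n - 1 - i)) where
  injOn i hi j hj hij := by
    simp only [Set.mem_Iic] at hi hj
    have := h.injOn (by simp : n - i ∈ Set.Iic n) (by simp : n - j ∈ Set.Iic n) hij
    omega
  mem i hi := h.mem _ (by omega)
  inc_eq i hi := by
    rw [h.inc_eq _ (by omega), Sym2.eq_swap, show n - 1 - i + 1 = n - i by omega,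
      show n - (i + 1) = n - 1 - i by omega]

lemma image_reverse : (fun i => z (n - i)) '' Set.Iic n = z '' Set.Iic n := by
  ext x
  constructor
  · rintro ⟨i, -, rfl⟩
    exact ⟨n - i, by simp, rfl⟩
  · rintro ⟨i, hi, rfl⟩
    simp only [Set.mem_Iic] at hi
    exact ⟨n - i, by simp, by simp only; congr 1; omega⟩

/-- A chain closed up by an edge `z n — z 0` is a cycle, so it can be reopened at any vertex. -/
lemma exists_rotation {f : E} {q : ℕ} (h : G.IsChain F n z e) (hf : f ∈ F)
    (hfz : G.inc f = s(z n, z 0)) (hp : p ≤ n) (hq : q ≤ n) :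
    ∃ z' e', G.IsChain F n z' e' ∧ z' q = z p ∧ z' '' Set.Iic n = z '' Set.Iic n := by
  set r := if q ≤ p then p - q else p + (n + 1) - q
  set ρ : ℕ → ℕ := fun i => if i + r ≤ n then i + r else i + r - (n + 1) with hρ
  have hr : r ≤ n := by simp only [r]; split_ifs <;> omega
  have hρn : ∀ i ≤ n, ρ i ≤ n := fun i hi => by simp only [hρ]; split_ifs <;> omega
  have hρsucc : ∀ i < n, ρ (i + 1) = if ρ i = n then 0 else ρ i + 1 := fun i hi => by
    simp only [hρ]; split_ifs <;> omega
  refine ⟨z ∘ ρ, fun i => if ρ i = n then f else e (ρ i), ⟨?_, ?_, ?_⟩, ?_, ?_⟩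
  · intro i hi j hj hij
    simp only [Set.mem_Iic] at hi hj
    have := h.injOn (hρn i hi) (hρn j hj) hij
    simp only [hρ] at this
    split_ifs at this <;> omega
  · intro i hi
    split_ifs with hρi
    exacts [hf, h.mem _ (lt_of_le_of_ne (hρn i hi.le) hρi)]
  · intro i hi
    simp only [Function.comp_apply, hρsucc i hi]
    split_ifs with hρi
    · rw [hρi]; exact hfz
    · exact h.inc_eq _ (lt_of_le_of_ne (hρn i hi.le) hρi)
  · simp only [Function.comp_apply, hρ, r]
    congr 1
    split_ifs <;> omega
  · ext x
    constructor
    · rintro ⟨i, hi, rfl⟩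
      exact ⟨ρ i, hρn i hi, rfl⟩
    · rintro ⟨j, hj, rfl⟩
      simp only [Set.mem_Iic] at hj
      refine ⟨if r ≤ j then j - r else j + (n + 1) - r,
        Set.mem_Iic.2 (by split_ifs <;> omega), ?_⟩
      simp only [Function.comp_apply, hρ]
      congr 1
      split_ifs <;> omega

lemma exists_closing_edge [Finite E] (h : G.IsChain F n z e) (hdeg : ∀ x, G.degOn F x ≤ 2)
    (hn : 0 < n) (hₙ : ∀ y, G.AdjOn F (z n) y → y ∈ z '' Set.Iic n)
    (h₂ : 2 ≤ G.degOn F (z n)) : ∃ f ∈ F, G.inc f = s(z n, z 0) := by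
  obtain ⟨f, hf, hfe, y, hfy⟩ := exists_edge_ne_of_two_le_degOn (e := e (n - 1)) h₂
  obtain ⟨j, hj, rfl⟩ := hₙ y ⟨f, hf, hfy⟩
  simp only [Set.mem_Iic] at hj
  rcases Nat.eq_zero_or_pos j with rfl | hj₀
  · exact ⟨f, hf, hfy⟩
  rcases hj.eq_or_lt with rfl | hjn
  · exact absurd rfl (ne_of_inc_eq hfy)
  obtain ⟨k, rfl⟩ : ∃ k, j = k + 1 := ⟨j - 1, by omega⟩
  have hzn : z n ∈ G.inc f := hfy ▸ Sym2.mem_mk_left _ _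
  rcases h.eq_or_eq_of_mem_inc hdeg hjn hf (hfy ▸ Sym2.mem_mk_right _ _) with rfl | rfl
  · have := h.eq_of_mem_inc le_rfl (by omega) hzn
    omega
  · have := h.eq_of_mem_inc le_rfl hjn hzn
    exact absurd (by congr 1; omega) hfe

lemma ncard_image (h : G.IsChain F n z e) : (z '' Set.Iic n).ncard = n + 1 := by
  rw [h.injOn.ncard_image]
  simp

lemma isTree (h : G.IsChain F n z e) : G.IsTree (z '' Set.Iic n) (e '' Set.Iio n) where
  nonempty := ⟨z 0, 0, by simp, rfl⟩
  edges_in := by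
    rintro _ ⟨i, hi, rfl⟩ y hy
    exact h.mem_image_of_mem_inc hi hy
  conn := by
    rintro _ ⟨i, hi, rfl⟩ _ ⟨j, hj, rfl⟩
    exact h.reachOn (fun k hk => ⟨k, hk, rfl⟩) hi hj
  card_eq := by
    rw [h.injOn_edge.ncard_image, h.ncard_image]
    simp

lemma exists_properOn (h : G.IsChain F n z e) (p : ℕ) :
    ∃ c : V → Bool, G.ProperOn (e '' Set.Iio n) c ∧
      ∀ i ≤ n, c (z i) = decide ((i + p) % 2 = 0) := by
  classical
  let c : V → Bool := fun x => decide (∃ i ≤ n, z i = x ∧ (i + p) % 2 = 0)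
  have hc : ∀ i ≤ n, c (z i) = decide ((i + p) % 2 = 0) := by
    refine fun i hi => decide_eq_decide.2
      ⟨fun ⟨j, hj, hji, hjp⟩ => ?_, fun hip => ⟨i, hi, rfl, hip⟩⟩
    rwa [h.injOn hj hi hji] at hjp
  refine ⟨c, ?_, hc⟩
  rintro _ ⟨i, hi, rfl⟩ a b hab
  simp only [Set.mem_Iio] at hi
  rw [h.inc_eq i hi] at hab
  rcases Sym2.eq_iff.1 hab with ⟨rfl, rfl⟩ | ⟨rfl, rfl⟩ <;>
  · rw [hc _ (by omega), hc _ (by omega)]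
    simp only [ne_eq, decide_eq_decide]
    omega

end IsChain

/-- A longest path of `F` through `v` cannot be extended at either end, so it spans the
component of `v`. -/
lemma exists_chain_eq_component [Finite V] [Finite E] [Nonempty E]
    (hdeg : ∀ x, G.degOn F x ≤ 2) (v : V) :
    ∃ n z e p, G.IsChain F n z e ∧ p ≤ n ∧ z p = v ∧ {x | G.ReachOn F v x} = z '' Set.Iic n := by
  let P : ℕ → Prop := fun m => ∃ z e p, G.IsChain F m z e ∧ p ≤ m ∧ z p = v
  have hP₀ : P 0 := ⟨fun _ => v, fun _ => Classical.arbitrary E, 0,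
    ⟨fun i hi j hj _ => by simp_all, fun i hi => absurd hi i.not_lt_zero,
      fun i hi => absurd hi i.not_lt_zero⟩, le_rfl, rfl⟩
  obtain ⟨n, ⟨z, e, p, h, hp, rfl⟩, hmax⟩ : ∃ n, P n ∧ ¬ P (n + 1) := by
    by_contra! hall
    obtain ⟨z, e, p, h, -⟩ := Nat.rec (motive := P) hP₀ hall (Nat.card V)
    have := h.ncard_image ▸ Set.ncard_le_card (z '' Set.Iic (Nat.card V))
    omega
  refine ⟨n, z, e, p, h, hp, rfl, h.component_eq hdeg hp (fun y ⟨f, hf, hfy⟩ => ?_)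
    (fun y ⟨f, hf, hfy⟩ => ?_)⟩
  · rw [← IsChain.image_reverse]
    by_contra hy
    refine hmax ⟨_, _, n - p, h.reverse.snoc hf (by simpa using hfy) hy, by omega, ?_⟩
    rw [Function.update_of_ne (by omega)]
    simp only [Nat.sub_sub_self hp]
  · by_contra hy
    exact hmax ⟨_, _, p, h.snoc hf hfy hy, by omega, by rw [Function.update_of_ne (by omega)]⟩

lemma exists_chain_eq_component_odd_ends [Finite V] [Finite E] [Nonempty E]
    (hdeg : ∀ x, G.degOn F x ≤ 2) (v : V) :
    ∃ n z e p, G.IsChain F n z e ∧ p ≤ n ∧ z p = v ∧ {x | G.ReachOn F v x} = z '' Set.Iic n ∧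
      ∀ q, (q = 0 ∨ q = n) → q ≠ p → 2 ≤ G.degOn F (z q) → (q + p) % 2 = 1 := by
  obtain ⟨n, z, e, p, h, hp, rfl, hcomp⟩ := exists_chain_eq_component hdeg v
  by_cases hcyc : ∃ q, (q = 0 ∨ q = n) ∧ q ≠ p ∧ 2 ≤ G.degOn F (z q)
  swap
  · push Not at hcyc
    exact ⟨n, z, e, p, h, hp, rfl, hcomp, fun q hq hqp h₂ => absurd h₂ (hcyc q hq hqp).not_ge⟩
  obtain ⟨q, hq, hqp, h₂⟩ := hcyc
  have hadj : ∀ i ≤ n, ∀ y, G.AdjOn F (z i) y → y ∈ z '' Set.Iic n := fun i hi y hy =>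
    hcomp ▸ (h.reachOn h.mem hp hi).tail hy
  obtain ⟨f, hf, hfz⟩ : ∃ f ∈ F, G.inc f = s(z n, z 0) := by
    rcases hq with rfl | rfl
    · obtain ⟨f, hf, hfz⟩ := h.reverse.exists_closing_edge hdeg (by omega)
        (fun y hy => IsChain.image_reverse (z := z) ▸ hadj 0 (Nat.zero_le _) y (by simpa using hy))
        (by simpa using h₂)
      exact ⟨f, hf, by simpa [Sym2.eq_swap] using hfz⟩
    · exact h.exists_closing_edge hdeg (by omega) (hadj q le_rfl) h₂
  obtain ⟨z', e', h', hz', himage⟩ := h.exists_rotation hf hfz hp (q := (n + 1) % 2) (by omega)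
  exact ⟨n, z', e', (n + 1) % 2, h', by omega, hz', himage ▸ hcomp, fun q hq hqp _ => by omega⟩

lemma exists_isTree_component [Finite V] [Finite E] [Nonempty E]
    (hdeg : ∀ x, G.degOn F x ≤ 2) (v : V) :
    ∃ (S₂ : Set E) (c₂ : V → Bool), G.IsTree {x | G.ReachOn F v x} S₂ ∧ G.ProperOn S₂ c₂ ∧
      c₂ v = true ∧ (1 ≤ G.degOn F v → 1 ≤ G.degOn S₂ v) ∧
      ∀ x ∈ {x | G.ReachOn F v x}, x ≠ v → G.degOn S₂ x ≤ 1 → 2 ≤ G.degOn F x →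
        c₂ x = false := by
  obtain ⟨n, z, e, p, h, hp, rfl, hcomp, hends⟩ := exists_chain_eq_component_odd_ends hdeg v
  obtain ⟨c, hc, hcz⟩ := h.exists_properOn p
  have htree := hcomp ▸ h.isTree
  refine ⟨e '' Set.Iio n, c, htree, hc, by simp [hcz p hp]; omega, fun h₁ => ?_, ?_⟩
  · obtain ⟨f, hf, y, hfy⟩ := exists_inc_eq_of_one_le_degOn h₁
    exact htree.one_le_degOn Relation.ReflTransGen.refl (Relation.ReflTransGen.single ⟨f, hf, hfy⟩)
      (ne_of_inc_eq hfy).symm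
  intro x hx hxv hleaf h₂
  obtain ⟨i, hi, rfl⟩ := (Set.ext_iff.1 hcomp x).1 hx
  have hend : i = 0 ∨ i = n := by
    by_contra! hin
    obtain ⟨k, rfl⟩ : ∃ k, i = k + 1 := ⟨i - 1, by omega⟩
    have := h.two_le_degOn (S := e '' Set.Iio n) (fun j hj => ⟨j, hj, rfl⟩)
      (lt_of_le_of_ne hi hin.2)
    omega
  rw [hcz i hi, hends i hend (fun hip => hxv (hip ▸ rfl)) h₂]
  rfl

def IsGood (G : Multigraph V E) (F : Set E) (U : Set V) : Prop :=
  ∀ u ∈ U, ∀ v : V, G.ReachOn F u v → v ∈ U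

def IsWeaklyEven [Fintype V] (G : Multigraph V E) (S : Set E) (c : V → Bool) : Prop :=
  ∀ v : V, G.IsLeaf S v → G.degree v = G.maxDegree → c v = false

lemma IsWeakTwoFactor.two_le_degOn [Fintype V] (hF : G.IsWeakTwoFactor F)
    (hx : G.degree x = G.maxDegree) : 2 ≤ G.degOn F x :=
  not_lt.1 fun h => ((hF x).2 h).ne hx

lemma IsWeaklyEven.union_insert [Fintype V] [Finite E] [DecidablePred (· ∈ U)]
    {U₂ : Set V} {S₂ : Set E} {e₀ : E} {c c₂ : V → Bool} (hF : G.IsWeakTwoFactor F)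
    (h₁ : G.IsTree U S) (h₂ : G.IsTree U₂ S₂) (hU : Disjoint U U₂) (he₀ : G.inc e₀ = s(u, v))
    (hu : u ∈ U) (hv : v ∈ U₂) (hwe : G.IsWeaklyEven S c) (hcu : c u = false)
    (hv₂ : 1 ≤ G.degOn F v → 1 ≤ G.degOn S₂ v)
    (hwe₂ : ∀ x ∈ U₂, x ≠ v → G.degOn S₂ x ≤ 1 → 2 ≤ G.degOn F x → c₂ x = false) :
    G.IsWeaklyEven (S ∪ insert e₀ S₂) (U.piecewise c c₂) := by
  obtain ⟨hS, he₂⟩ := h₁.disjoint_insert h₂ hU he₀ hu hv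
  intro x hleaf hx
  have hF₂ := hF.two_le_degOn hx
  have hleaf : G.degOn (S ∪ insert e₀ S₂) x = 1 := hleaf
  have hxU : x ∈ U ∪ U₂ := by_contra fun h =>
    absurd ((h₁.union_insert h₂ hU he₀ hu hv).degOn_eq_zero h ▸ hleaf) zero_ne_one
  rw [degOn_union hS, Set.insert_eq, degOn_union (Set.disjoint_singleton_left.2 he₂),
    degOn_singleton] at hleaf
  have hxe : x ∈ G.inc e₀ → x = u ∨ x = v := by rw [he₀, Sym2.mem_iff]; exact id
  rcases hxU with hxU | hxU₂
  · rw [Set.piecewise_eq_of_mem _ _ _ hxU]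
    by_cases hxu : x = u
    · rwa [hxu]
    have hxv : x ≠ v := fun h => Set.disjoint_left.1 hU hxU (h ▸ hv)
    rw [if_neg fun h => (hxe h).elim hxu hxv, h₂.degOn_eq_zero (Set.disjoint_left.1 hU hxU)]
      at hleaf
    exact hwe x hleaf hx
  · have hxU : x ∉ U := Set.disjoint_right.1 hU hxU₂
    rw [Set.piecewise_eq_of_notMem _ _ _ hxU]
    rw [h₁.degOn_eq_zero hxU] at hleaf
    by_cases hxv : x = v
    · rw [hxv, if_pos (he₀ ▸ Sym2.mem_mk_right u v)] at hleaf
      have := hv₂ (by rw [← hxv]; omega)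
      omega
    · rw [if_neg fun h => (hxe h).elim (fun h => hxU (h ▸ hu)) hxv] at hleaf
      exact hwe₂ x hxU₂ hxv (by omega) hF₂

lemma exists_larger_good_tree [Fintype V] [Finite E] {c : V → Bool} {e₀ : E}
    (hF : G.IsWeakTwoFactor F) (htree : G.IsTree U S) (hgood : G.IsGood F U)
    (hc : G.ProperOn S c) (hwe : G.IsWeaklyEven S c) (he₀ : G.inc e₀ = s(u, v)) (hu : u ∈ U)
    (hcu : c u = false) (hv : v ∉ U) :
    ∃ (U' : Set V) (S' : Set E) (c' : V → Bool), U ⊂ U' ∧ G.IsTree U' S' ∧ G.IsGood F U' ∧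
      G.ProperOn S' c' ∧ (∀ x ∈ U, c' x = c x) ∧ G.IsWeaklyEven S' c' := by
  classical
  have : Nonempty E := ⟨e₀⟩
  set C := {x | G.ReachOn F v x}
  obtain ⟨S₂, c₂, htree₂, hc₂, hc₂v, hv₂, hwe₂⟩ := exists_isTree_component (fun x => (hF x).1) v
  have hvC : v ∈ C := Relation.ReflTransGen.refl
  have hUC : Disjoint U C := Set.disjoint_left.2 fun x hx hxC => hv (hgood x hx v hxC.symm)
  refine ⟨U ∪ C, S ∪ insert e₀ S₂, U.piecewise c c₂,
    Set.ssubset_union_left_iff.2 fun h => hv (h hvC), htree.union_insert htree₂ hUC he₀ hu hvC,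
    ?_, hc.union_insert hc₂ htree.edges_in htree₂.edges_in hUC he₀ hu hv
      (by rw [hcu, hc₂v]; decide),
    fun x hx => Set.piecewise_eq_of_mem _ _ _ hx,
    hwe.union_insert hF htree htree₂ hUC he₀ hu hvC hcu hv₂ hwe₂⟩
  rintro a (ha | ha) y hay
  exacts [Or.inl (hgood a ha y hay), Or.inr (Relation.ReflTransGen.trans ha hay)]

end Multigraph

theorem edges_leaving_maximum_good_tree_general {V E : Type} [Fintype V] [Fintype E]
    (G : Multigraph V E) (h2ec : G.TwoEdgeConnected)
    (F : Set E) (hF : G.IsWeakTwoFactor F) (w : V) (lam : Bool)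
    (U : Set V) (S : Set E) (c : V → Bool)
    (hwU : w ∈ U) (htree : G.IsTree U S)
    (hgood : ∀ u ∈ U, ∀ v : V, G.ReachOn F u v → v ∈ U)
    (hc : G.ProperOn S c) (hcw : c w = lam)
    (hwe : ∀ v : V, G.IsLeaf S v → G.degree v = G.maxDegree → c v = false)
    (hmax : ∀ (U' : Set V) (S' : Set E) (c' : V → Bool),
      w ∈ U' → G.IsTree U' S' →
      (∀ u ∈ U', ∀ v : V, G.ReachOn F u v → v ∈ U') →
      G.ProperOn S' c' → c' w = lam →
      (∀ v : V, G.IsLeaf S' v → G.degree v = G.maxDegree → c' v = false) →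
      U'.ncard ≤ U.ncard)
    (hne : U ≠ Set.univ) :
    (¬ ∃ (e : E) (u v : V), G.inc e = s(u, v) ∧ u ∈ U ∧ c u = false ∧ v ∉ U) ∧
    (∃ (e : E) (u v : V), G.inc e = s(u, v) ∧ u ∈ U ∧ c u = true ∧ v ∉ U) := by
  have hnone : ¬ ∃ (e : E) (u v : V), G.inc e = s(u, v) ∧ u ∈ U ∧ c u = false ∧ v ∉ U := by
    rintro ⟨e, u, v, he, hu, hcu, hv⟩
    obtain ⟨U', S', c', hUU', htree', hgood', hc', hcc', hwe'⟩ :=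
      Multigraph.exists_larger_good_tree hF htree hgood hc hwe he hu hcu hv
    exact (Set.ncard_lt_ncard hUU').not_ge
      (hmax U' S' c' (hUU'.subset hwU) htree' hgood' hc' ((hcc' w hwU).trans hcw) hwe')
  obtain ⟨x, hx⟩ := (Set.ne_univ_iff_exists_notMem U).1 hne
  obtain ⟨u, v, ⟨e, -, he⟩, hu, hv⟩ := (h2ec.1.2 w x).exists_adjOn_of_mem_of_notMem hwU hx
  refine ⟨hnone, e, u, v, he, hu, ?_, hv⟩
  exact Bool.not_eq_false _ ▸ fun hcu => hnone ⟨e, u, v, he, hu, hcu, hv⟩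

/-- Let `G` be a 2-edge-connected non-regular multigraph, `F`
a weak 2-factor of `G`, `w ∈ V(G)` and `lam ∈ {0,1}` (with `false` for type 0
and `true` for type 1). Let `T` (vertex set `U`, edge set `S`) be a good weakly
even `(w, lam)`-tree of maximum order, with `(w, lam)`-bipartition given by the
proper 2-colouring `c` (so `X₀ = {v ∈ U | c v = false}` and
`Y₀ = {v ∈ U | c v = true}`), and suppose `U ≠ V(G)`. Then no edge of `G` joins
a vertex of `X₀` to a vertex outside `U`, and some edge of `G` joins a vertex
of `Y₀` to a vertex outside `U`. -/
theorem edges_leaving_maximum_good_tree {V E : Type} [Fintype V] [Fintype E]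
    (G : Multigraph V E) (h2ec : G.TwoEdgeConnected) (hnreg : ¬ G.IsRegular)
    (F : Set E) (hF : G.IsWeakTwoFactor F) (w : V) (lam : Bool)
    (U : Set V) (S : Set E) (c : V → Bool)
    (hwU : w ∈ U) (htree : G.IsTree U S)
    (hgood : ∀ u ∈ U, ∀ v : V, G.ReachOn F u v → v ∈ U)
    (hc : G.ProperOn S c) (hcw : c w = lam)
    (hwe : ∀ v : V, G.IsLeaf S v → G.degree v = G.maxDegree → c v = false)
    (hmax : ∀ (U' : Set V) (S' : Set E) (c' : V → Bool),
      w ∈ U' → G.IsTree U' S' →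
      (∀ u ∈ U', ∀ v : V, G.ReachOn F u v → v ∈ U') →
      G.ProperOn S' c' → c' w = lam →
      (∀ v : V, G.IsLeaf S' v → G.degree v = G.maxDegree → c' v = false) →
      U'.ncard ≤ U.ncard)
    (hne : U ≠ Set.univ) :
    (¬ ∃ (e : E) (u v : V), G.inc e = s(u, v) ∧ u ∈ U ∧ c u = false ∧ v ∉ U) ∧
    (∃ (e : E) (u v : V), G.inc e = s(u, v) ∧ u ∈ U ∧ c u = true ∧ v ∉ U) :=
  edges_leaving_maximum_good_tree_general G h2ec F hF w lam U S c hwU htree hgood hc hcw hwe hmax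
    hne
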